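/- Under Assumptions [A1] and [A2], if E[U] = 0, E[U Uᵀ] = (1/d)·I_d, and β := E[W]·E[W^{−1}] < d/(d−1), then the matrix Γ_θ is positive definite (i.e., Assumption [A4] holds). -/

import Mathlib

open MeasureTheory ProbabilityTheory Filter
open scoped ENNReal NNReal RealInnerProductSpace Topology

noncomputable section

/-- The sample space `ℝ^d`. -/
abbrev Vec (d : ℕ) := EuclideanSpace ℝ (Fin d)

/-- The parameter space `ℝ^d × ℝ`, equipped with the euclidean (`L²`) norm. -/
abbrev Par (d : ℕ) := WithLp 2 (EuclideanSpace ℝ (Fin d) × ℝ)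

/-- Build an element of the parameter space from a center and a radius. -/
def pmk {d : ℕ} (z : Vec d) (a : ℝ) : Par d :=
  (WithLp.equiv 2 (EuclideanSpace ℝ (Fin d) × ℝ)).symm (z, a)

/-- First (center) component of a parameter. -/
def pz {d : ℕ} (y : Par d) : Vec d := (WithLp.equiv 2 (EuclideanSpace ℝ (Fin d) × ℝ) y).1

/-- Second (radius) component of a parameter. -/
def pa {d : ℕ} (y : Par d) : ℝ := (WithLp.equiv 2 (EuclideanSpace ℝ (Fin d) × ℝ) y).2

/-- `Hgrad x y` is the gradient in `y = (z, a)` of `g(x,y) = (‖x - z‖ - a)²/2`, i.e.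
`(z - x - a (z-x)/‖z-x‖, a - ‖z-x‖)`. -/
def Hgrad {d : ℕ} (x : Vec d) (y : Par d) : Par d :=
  pmk (pz y - x - pa y • (‖pz y - x‖⁻¹ • (pz y - x))) (pa y - ‖pz y - x‖)

/-- `Phi P X y = E[Hgrad (X) y]`, the gradient of `G(y) = E[(‖X-z‖-a)²]/2`. -/
def Phi {Ω : Type*} [MeasurableSpace Ω] {d : ℕ} (P : Measure Ω) (X : Ω → Vec d)
    (y : Par d) : Par d :=
  ∫ ω, Hgrad (X ω) y ∂P

/-- Quadratic form `v ↦ vᵀ Γ(z) v` of the matrix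
`Γ(z) = E[(1/‖X-z‖)(I_d - (X-z)(X-z)ᵀ/‖X-z‖²)]`. -/
def GammaQF {Ω : Type*} [MeasurableSpace Ω] {d : ℕ} (P : Measure Ω) (X : Ω → Vec d)
    (z v : Vec d) : ℝ :=
  ∫ ω, ‖X ω - z‖⁻¹ * (‖v‖ ^ 2 - ⟪X ω - z, v⟫ ^ 2 / ‖X ω - z‖ ^ 2) ∂P

/-- The Hessian matrix `Γ_y` of `G` at `y = (z, a)`, applied to a vector `y' = (z', a')`:
`Γ_y = [[I_d - a E[(1/‖X-z‖)(I_d - (X-z)(X-z)ᵀ/‖X-z‖²)], E[(X-z)/‖X-z‖]], [E[(X-z)/‖X-z‖]ᵀ, 1]]`. -/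
def GammaAt {Ω : Type*} [MeasurableSpace Ω] {d : ℕ} (P : Measure Ω) (X : Ω → Vec d)
    (y y' : Par d) : Par d :=
  pmk (pz y' - pa y • (∫ ω, ‖X ω - pz y‖⁻¹ •
          (pz y' - (⟪X ω - pz y, pz y'⟫ / ‖X ω - pz y‖ ^ 2) • (X ω - pz y)) ∂P)
        + pa y' • ∫ ω, ‖X ω - pz y‖⁻¹ • (X ω - pz y) ∂P)
      (⟪∫ ω, ‖X ω - pz y‖⁻¹ • (X ω - pz y) ∂P, pz y'⟫ + pa y')

/-!
Since `X - μ = r W U` with `U` centred, `E[(X - μ)/‖X - μ‖] = E[U] = 0`, so `Γ_θ` is block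
diagonal and `⟪(v, a), Γ_θ (v, a)⟫ = ‖v‖² - r* vᵀ Γ(μ) v + a²`. As `‖X - μ‖ = r W`,
the integrand of `vᵀ Γ(μ) v` is `(r W)⁻¹ (‖v‖² - ⟪U, v⟫²)`, so by independence and isotropy of `U`
`r* vᵀ Γ(μ) v = E[W] E[W⁻¹] (1 - 1/d) ‖v‖² = β (1 - 1/d) ‖v‖²`, and `β (1 - 1/d) < 1` is exactly
the hypothesis on `β`.
-/

section ParameterSpace

variable {d : ℕ}

lemma pz_pmk (z : Vec d) (a : ℝ) : pz (pmk z a) = z := rfl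

lemma pa_pmk (z : Vec d) (a : ℝ) : pa (pmk z a) = a := rfl

lemma inner_pmk (y : Par d) (z : Vec d) (a : ℝ) : ⟪y, pmk z a⟫ = ⟪pz y, z⟫ + pa y * a := by
  simp [pz, pa, pmk, mul_comm]

lemma pz_ne_zero_or_pa_ne_zero {y : Par d} (hy : y ≠ 0) : pz y ≠ 0 ∨ pa y ≠ 0 := by
  by_contra! h
  apply hy
  change pmk (pz y) (pa y) = 0
  rw [h.1, h.2]
  rfl

lemma mul_sq_norm_pz_add_sq_pa_pos {c : ℝ} (hc : 0 < c) {y : Par d} (hy : y ≠ 0) :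
    0 < c * ‖pz y‖ ^ 2 + pa y ^ 2 := by
  rcases pz_ne_zero_or_pa_ne_zero hy with hz | ha
  · have := norm_pos_iff.2 hz
    positivity
  · have := sq_pos_of_ne_zero ha
    positivity

end ParameterSpace

section Integrals

variable {Ω : Type*} [MeasurableSpace Ω] {P : Measure Ω} {d : ℕ}

lemma norm_sub_inner_div_sq_smul_le {E : Type*} [NormedAddCommGroup E] [InnerProductSpace ℝ E]
    (w v : E) : ‖v - (⟪w, v⟫ / ‖w‖ ^ 2) • w‖ ≤ 2 * ‖v‖ := by
  rcases eq_or_ne w 0 with rfl | hw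
  · simp [two_mul]
  have hw' := norm_pos_iff.2 hw
  have hproj : ‖(⟪w, v⟫ / ‖w‖ ^ 2) • w‖ ≤ ‖v‖ := by
    rw [norm_smul, norm_div, norm_pow, norm_norm, Real.norm_eq_abs, div_mul_eq_mul_div,
      div_le_iff₀ (by positivity)]
    calc |⟪w, v⟫| * ‖w‖ ≤ ‖w‖ * ‖v‖ * ‖w‖ := by gcongr; exact abs_real_inner_le_norm w v
      _ = ‖v‖ * ‖w‖ ^ 2 := by ring
  linarith [norm_sub_le v ((⟪w, v⟫ / ‖w‖ ^ 2) • w)]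

lemma integrable_inv_norm_smul_sub_inner_div_sq_smul {X : Ω → Vec d} (hX : Measurable X)
    (z v : Vec d) (hinv : Integrable (fun ω => ‖X ω - z‖⁻¹) P) :
    Integrable (fun ω => ‖X ω - z‖⁻¹ •
      (v - (⟪X ω - z, v⟫ / ‖X ω - z‖ ^ 2) • (X ω - z))) P := by
  refine (hinv.mul_const (2 * ‖v‖)).mono' (by fun_prop) (ae_of_all _ fun ω => ?_)
  rw [norm_smul, norm_inv, norm_norm]
  gcongr
  exact norm_sub_inner_div_sq_smul_le _ _

lemma inner_gammaAt_pmk_of_integral_eq_zero {X : Ω → Vec d} {z : Vec d} (a : ℝ) (y : Par d)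
    (hdir : ∫ ω, ‖X ω - z‖⁻¹ • (X ω - z) ∂P = 0)
    (hint : Integrable (fun ω => ‖X ω - z‖⁻¹ •
      (pz y - (⟪X ω - z, pz y⟫ / ‖X ω - z‖ ^ 2) • (X ω - z))) P) :
    ⟪y, GammaAt P X (pmk z a) y⟫ = ‖pz y‖ ^ 2 - a * GammaQF P X z (pz y) + pa y ^ 2 := by
  rw [GammaAt, pz_pmk, pa_pmk, hdir, smul_zero, add_zero, inner_zero_left, zero_add, inner_pmk,
    inner_sub_right, real_inner_smul_right, ← integral_inner hint, real_inner_self_eq_norm_sq,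
    GammaQF, sq (pa y)]
  congr 3
  refine integral_congr_ae (ae_of_all _ fun ω => ?_)
  dsimp only
  rw [real_inner_smul_right, inner_sub_right, real_inner_smul_right, real_inner_self_eq_norm_sq,
    real_inner_comm]
  ring

lemma inv_norm_smul_mul_sub_inner_sq_div {E : Type*} [NormedAddCommGroup E]
    [InnerProductSpace ℝ E] {s : ℝ} (hs : 0 < s) {u : E} (hu : ‖u‖ = 1) (v : E) :
    ‖s • u‖⁻¹ * (‖v‖ ^ 2 - ⟪s • u, v⟫ ^ 2 / ‖s • u‖ ^ 2) = s⁻¹ * (‖v‖ ^ 2 - ⟪u, v⟫ ^ 2) := by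
  rw [norm_smul, hu, mul_one, Real.norm_of_nonneg hs.le, real_inner_smul_left]
  field_simp

lemma integral_inner_sq_of_integral_inner_smul [IsFiniteMeasure P] {U : Ω → Vec d}
    (hUm : Measurable U) (hU : ∀ ω, ‖U ω‖ ≤ 1) {c : ℝ} {v : Vec d}
    (hUU : ∫ ω, ⟪U ω, v⟫ • U ω ∂P = c • v) :
    ∫ ω, ⟪U ω, v⟫ ^ 2 ∂P = c * ‖v‖ ^ 2 := by
  have hint : Integrable (fun ω => ⟪U ω, v⟫ • U ω) P := by
    refine .of_bound (by fun_prop) ‖v‖ (ae_of_all _ fun ω => ?_)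
    rw [norm_smul, Real.norm_eq_abs]
    calc |⟪U ω, v⟫| * ‖U ω‖ ≤ ‖U ω‖ * ‖v‖ * 1 := by
          gcongr
          exacts [abs_real_inner_le_norm _ _, hU ω]
      _ ≤ ‖v‖ := by nlinarith [hU ω, norm_nonneg v]
  calc ∫ ω, ⟪U ω, v⟫ ^ 2 ∂P = ∫ ω, ⟪v, ⟪U ω, v⟫ • U ω⟫ ∂P := by
        refine integral_congr_ae (ae_of_all _ fun ω => ?_)
        simp only [real_inner_smul_right, real_inner_comm v, sq]
    _ = c * ‖v‖ ^ 2 := by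
      rw [integral_inner hint, hUU, real_inner_smul_right, real_inner_self_eq_norm_sq]

lemma gammaQF_eq_of_sub_eq_smul [IsProbabilityMeasure P] {X : Ω → Vec d} {μ : Vec d} {r : ℝ}
    {W : Ω → ℝ} {U : Ω → Vec d} (hr : 0 < r) (hWm : Measurable W) (hUm : Measurable U)
    (hWpos : ∀ ω, 0 < W ω) (hUnorm : ∀ ω, ‖U ω‖ = 1) (hindep : IndepFun W U P)
    (hXμ : ∀ ω, X ω - μ = (r * W ω) • U ω) {c : ℝ}
    (hUU : ∀ v : Vec d, ∫ ω, ⟪U ω, v⟫ • U ω ∂P = c • v) (v : Vec d) :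
    GammaQF P X μ v = r⁻¹ * (∫ ω, (W ω)⁻¹ ∂P) * (1 - c) * ‖v‖ ^ 2 := by
  have hsq : Integrable (fun ω => ⟪U ω, v⟫ ^ 2) P := by
    refine .of_bound (by fun_prop) (‖v‖ ^ 2) (ae_of_all _ fun ω => ?_)
    rw [norm_pow, Real.norm_eq_abs]
    gcongr
    simpa [hUnorm] using abs_real_inner_le_norm (U ω) v
  have hφψ : IndepFun (fun ω => (W ω)⁻¹) (fun ω => r⁻¹ * (‖v‖ ^ 2 - ⟪U ω, v⟫ ^ 2)) P :=
    hindep.comp (ψ := fun u => r⁻¹ * (‖v‖ ^ 2 - ⟪u, v⟫ ^ 2)) measurable_inv (by fun_prop)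
  calc GammaQF P X μ v = ∫ ω, (W ω)⁻¹ * (r⁻¹ * (‖v‖ ^ 2 - ⟪U ω, v⟫ ^ 2)) ∂P := by
        refine integral_congr_ae (ae_of_all _ fun ω => ?_)
        simp only [hXμ, inv_norm_smul_mul_sub_inner_sq_div (mul_pos hr (hWpos ω)) (hUnorm ω)]
        ring
    _ = (∫ ω, (W ω)⁻¹ ∂P) * (r⁻¹ * (‖v‖ ^ 2 - c * ‖v‖ ^ 2)) := by
      rw [hφψ.integral_fun_mul_eq_mul_integral (by fun_prop) (by fun_prop), integral_const_mul,
        integral_sub (integrable_const _) hsq, integral_const, probReal_univ, one_smul,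
        integral_inner_sq_of_integral_inner_smul hUm (fun ω => (hUnorm ω).le) (hUU v)]
    _ = r⁻¹ * (∫ ω, (W ω)⁻¹ ∂P) * (1 - c) * ‖v‖ ^ 2 := by ring

lemma integrable_inv_of_integrable_inv_sq [IsFiniteMeasure P] {f : Ω → ℝ} (hf : Measurable f)
    (h : Integrable (fun ω => (f ω ^ 2)⁻¹) P) : Integrable (fun ω => (f ω)⁻¹) P :=
  ((memLp_two_iff_integrable_sq hf.inv.aestronglyMeasurable).2 (by simpa [inv_pow] using h)
    ).integrable one_le_two

end Integrals

lemma one_sub_mul_one_sub_inv_pos {d β : ℝ} (hd : 1 < d) (hβ : β < d / (d - 1)) :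
    0 < 1 - β * (1 - d⁻¹) := by
  have hd' : 0 < d - 1 := sub_pos.2 hd
  rw [lt_div_iff₀ hd'] at hβ
  have : 1 - d⁻¹ = (d - 1) / d := by field_simp
  rw [this, mul_div_assoc', sub_pos, div_lt_one (by linarith)]
  exact hβ

theorem statement19_general
    {Ω : Type*} [MeasurableSpace Ω] (P : Measure Ω) [IsProbabilityMeasure P]
    {d : ℕ} (hd : 2 ≤ d)
    (μ : Vec d) (r : ℝ) (hr : 0 < r)
    (W : Ω → ℝ) (U : Ω → Vec d)
    (hWm : Measurable W) (hUm : Measurable U)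
    (hWpos : ∀ ω, 0 < W ω) (hUnorm : ∀ ω, ‖U ω‖ = 1)
    (hindep : IndepFun W U P)
    (X : Ω → Vec d) (hX : ∀ ω, X ω = μ + (r * W ω) • U ω)
    (rstar : ℝ) (hrstar : rstar = r * ∫ ω, W ω ∂P)
    (hA1 : Integrable (fun ω => (‖X ω - μ‖ ^ 2)⁻¹) P)
    (hEU : (∫ ω, U ω ∂P) = 0)
    (hUU : ∀ v : Vec d, (∫ ω, ⟪U ω, v⟫ • U ω ∂P) = (d : ℝ)⁻¹ • v)
    (hβ : (∫ ω, W ω ∂P) * (∫ ω, (W ω)⁻¹ ∂P) < (d : ℝ) / ((d : ℝ) - 1))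
    :
    ∀ y : Par d, y ≠ 0 → 0 < ⟪y, GammaAt P X (pmk μ rstar) y⟫ := by
  intro y hy
  have hXμ (ω : Ω) : X ω - μ = (r * W ω) • U ω := by rw [hX]; abel
  have hXm : Measurable X := by rw [funext hX]; fun_prop
  have hdir : ∫ ω, ‖X ω - μ‖⁻¹ • (X ω - μ) ∂P = 0 := by
    refine (integral_congr_ae (ae_of_all _ fun ω => ?_)).trans hEU
    rw [hXμ, norm_smul, hUnorm, mul_one, Real.norm_of_nonneg (mul_pos hr (hWpos ω)).le, smul_smul,
      inv_mul_cancel₀ (mul_pos hr (hWpos ω)).ne', one_smul]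
  have hinv : Integrable (fun ω => ‖X ω - μ‖⁻¹) P :=
    integrable_inv_of_integrable_inv_sq (by fun_prop) hA1
  have hc := one_sub_mul_one_sub_inv_pos (by exact_mod_cast hd) hβ
  rw [inner_gammaAt_pmk_of_integral_eq_zero rstar y hdir
      (integrable_inv_norm_smul_sub_inner_div_sq_smul hXm μ (pz y) hinv),
    gammaQF_eq_of_sub_eq_smul hr hWm hUm hWpos hUnorm hindep hXμ hUU, hrstar]
  convert mul_sq_norm_pz_add_sq_pa_pos hc hy using 1
  field_simp

theorem statement19
    {Ω : Type*} [MeasurableSpace Ω] (P : Measure Ω) [IsProbabilityMeasure P]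
    {d : ℕ} (hd : 2 ≤ d)
    (μ : Vec d) (r : ℝ) (hr : 0 < r)
    (W : Ω → ℝ) (U : Ω → Vec d)
    (hWm : Measurable W) (hUm : Measurable U)
    (hWpos : ∀ ω, 0 < W ω) (hUnorm : ∀ ω, ‖U ω‖ = 1)
    (hindep : IndepFun W U P)
    (X : Ω → Vec d) (hX : ∀ ω, X ω = μ + (r * W ω) • U ω)
    (rstar : ℝ) (hrstar : rstar = r * ∫ ω, W ω ∂P)
    (hA1 : Integrable (fun ω => (‖X ω - μ‖ ^ 2)⁻¹) P)
    (hA2 : Integrable (fun ω => ‖X ω - μ‖ ^ 2) P)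
    (hEU : (∫ ω, U ω ∂P) = 0)
    (hUU : ∀ v : Vec d, (∫ ω, ⟪U ω, v⟫ • U ω ∂P) = (d : ℝ)⁻¹ • v)
    (hβ : (∫ ω, W ω ∂P) * (∫ ω, (W ω)⁻¹ ∂P) < (d : ℝ) / ((d : ℝ) - 1))
    :
    ∀ y : Par d, y ≠ 0 → 0 < ⟪y, GammaAt P X (pmk μ rstar) y⟫ :=
  statement19_general P hd μ r hr W U hWm hUm hWpos hUnorm hindep X hX rstar hrstar hA1 hEU hUU hβ

end
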